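/- arXiv:2502.18960 — 7 statements merged into one kernel-verified Lean document; each statement's English description precedes it below -/
import Mathlib

section
/- Let p1, τ, σ1, σ0, sE1, sE0 be real numbers, set p0 := 1 − p1, and for a, a' ∈ {0,1} let Y_{a,a'} and S_{a,a'} be real numbers. Assume: (i) τ = Y_{1,1}·p1 + Y_{1,0}·p0 − Y_{0,1}·p1 − Y_{0,0}·p0; (ii) for each a ∈ {0,1}, S_{a,0} − S_{a,1} = Y_{a,0} − Y_{a,1}; (iii) for each a ∈ {0,1}, σ_a = S_{a,1}·p1 + S_{a,0}·p0; (iv) σ1 = sE1 and σ0 = sE0. Then τ = (Y_{1,1} − Y_{0,0}) + (sE1 − sE0) + (S_{0,0} − S_{1,1}). -/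
/-- Algebraic core of the identification theorem (Theorem 1) for heterogeneous
long-term causal effects under the CAECB assumption. -/
theorem stmt_0
    (p1 τ σ1 σ0 sE1 sE0 : ℝ)
    (Y11 Y10 Y01 Y00 S11 S10 S01 S00 : ℝ)
    (p0 : ℝ) (hp0 : p0 = 1 - p1)
    (hτ : τ = Y11 * p1 + Y10 * p0 - Y01 * p1 - Y00 * p0)
    (hCAECB1 : S10 - S11 = Y10 - Y11)
    (hCAECB0 : S00 - S01 = Y00 - Y01)
    (hσ1 : σ1 = S11 * p1 + S10 * p0)
    (hσ0 : σ0 = S01 * p1 + S00 * p0)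
    (hext1 : σ1 = sE1) (hext0 : σ0 = sE0) :
    τ = (Y11 - Y00) + (sE1 - sE0) + (S00 - S11) := by
  subst hp0 hτ hσ1 hσ0 hext1 hext0; linear_combination (p1 - 1) * hCAECB1 - p1 * hCAECB0
end

section
/- Let πE, πO, πG, π̂E, π̂O, π̂G ∈ (0,1) be real numbers, let μE1, μE0, μS1, μS0, μY1, μY0, μ̂E1, μ̂E0, μ̂S1, μ̂S0, μ̂Y1, μ̂Y0 be real numbers, and define R := (πE·πG·(1−π̂G)/(π̂E·π̂G·(1−πG)) − 1)·(μE1 − μ̂E1) − ((1−πE)·πG·(1−π̂G)/((1−π̂E)·π̂G·(1−πG)) − 1)·(μE0 − μ̂E0) + ((πO − π̂O)/π̂O)·(μY1 − μ̂Y1) − ((π̂O − πO)/(1−π̂O))·(μY0 − μ̂Y0) − ((πO − π̂O)/π̂O)·(μS1 − μ̂S1) + ((π̂O − πO)/(1−π̂O))·(μS0 − μ̂S0). If at least one of the following four conditions holds, then R = 0: (i) μ̂E1 = μE1, μ̂E0 = μE0, μ̂S1 = μS1, μ̂S0 = μS0, μ̂Y1 = μY1 and μ̂Y0 = μY0; (ii)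 π̂E = πE, π̂O = πO and π̂G = πG; (iii) μ̂E1 = μE1, μ̂E0 = μE0 and π̂O = πO; (iv) π̂E = πE, π̂G = πG, μ̂S1 = μS1, μ̂S0 = μS0, μ̂Y1 = μY1 and μ̂Y0 = μY0. -/
/-- Algebraic core of the multiple robustness lemma (Lemma 2): the pointwise
conditional bias R of the multiply robust pseudo-outcome vanishes if any of the
four sets of nuisance functions is correctly specified. -/
theorem stmt_2
    (πE πO πG πE' πO' πG' : ℝ)
    (hπE : πE ∈ Set.Ioo (0 : ℝ) 1) (hπO : πO ∈ Set.Ioo (0 : ℝ) 1)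
    (hπG : πG ∈ Set.Ioo (0 : ℝ) 1) (hπE' : πE' ∈ Set.Ioo (0 : ℝ) 1)
    (hπO' : πO' ∈ Set.Ioo (0 : ℝ) 1) (hπG' : πG' ∈ Set.Ioo (0 : ℝ) 1)
    (μE1 μE0 μS1 μS0 μY1 μY0 : ℝ)
    (μE1' μE0' μS1' μS0' μY1' μY0' : ℝ)
    (R : ℝ)
    (hR : R = (πE * πG * (1 - πG') / (πE' * πG' * (1 - πG)) - 1) * (μE1 - μE1')
      - ((1 - πE) * πG * (1 - πG') / ((1 - πE') * πG' * (1 - πG)) - 1) * (μE0 - μE0')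
      + ((πO - πO') / πO') * (μY1 - μY1')
      - ((πO' - πO) / (1 - πO')) * (μY0 - μY0')
      - ((πO - πO') / πO') * (μS1 - μS1')
      + ((πO' - πO) / (1 - πO')) * (μS0 - μS0'))
    (h : (μE1' = μE1 ∧ μE0' = μE0 ∧ μS1' = μS1 ∧ μS0' = μS0 ∧ μY1' = μY1 ∧ μY0' = μY0)
      ∨ (πE' = πE ∧ πO' = πO ∧ πG' = πG)
      ∨ (μE1' = μE1 ∧ μE0' = μE0 ∧ πO' = πO)
      ∨ (πE' = πE ∧ πG' = πG ∧ μS1' = μS1 ∧ μS0' = μS0 ∧ μY1' = μY1 ∧ μY0' = μY0)) :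
    R = 0 := by
  obtain ⟨hE0, hE1⟩ := hπE
  obtain ⟨hO0, hO1⟩ := hπO
  obtain ⟨hG0, hG1⟩ := hπG
  obtain ⟨hE'0, hE'1⟩ := hπE'
  obtain ⟨hO'0, hO'1⟩ := hπO'
  obtain ⟨hG'0, hG'1⟩ := hπG'
  have h1 : πE' ≠ 0 := ne_of_gt hE'0
  have h2 : (1 : ℝ) - πE' ≠ 0 := by linarith
  have h3 : πO' ≠ 0 := ne_of_gt hO'0
  have h4 : (1 : ℝ) - πO' ≠ 0 := by linarith
  have h5 : πG' ≠ 0 := ne_of_gt hG'0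
  have h6 : (1 : ℝ) - πG ≠ 0 := by linarith
  subst hR
  rcases h with ⟨a,b,c,d,e,f⟩ | ⟨a,b,c⟩ | ⟨a,b,c⟩ | ⟨a,b,c,d,e,f⟩ <;>
    subst_vars <;> field_simp <;> ring
end

section
/- Let ε ∈ (0,1] and let πE, πO, πG, π̂E, π̂O, π̂G, μE1, μE0, μS1, μS0, μY1, μY0, μ̂E1, μ̂E0, μ̂S1, μ̂S0, μ̂Y1, μ̂Y0 be real numbers with 0 ≤ πE ≤ 1, 0 ≤ πG ≤ 1, 0 ≤ π̂E ≤ 1, 0 ≤ π̂G ≤ 1, and ε ≤ π̂E, ε ≤ 1−π̂E, ε ≤ π̂G, ε ≤ 1−πG, ε ≤ π̂O, ε ≤ 1−π̂O. Define R := (πE·πG·(1−π̂G)/(π̂E·π̂G·(1−πG)) − 1)·(μE1 − μ̂E1) − ((1−πE)·πG·(1−π̂G)/((1−π̂E)·π̂G·(1−πG)) − 1)·(μE0 − μ̂E0) + ((πO − π̂O)/π̂O)·(μY1 − μ̂Y1) − ((π̂O − πO)/(1−π̂O))·(μY0 − μ̂Y0) − ((πO − π̂O)/π̂O)·(μS1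 − μ̂S1) + ((π̂O − πO)/(1−π̂O))·(μS0 − μ̂S0). Then |R| ≤ ε⁻³·(|πE − π̂E| + |πG − π̂G|)·(|μE1 − μ̂E1| + |μE0 − μ̂E0|) + ε⁻¹·|πO − π̂O|·(|μY1 − μ̂Y1| + |μY0 − μ̂Y0| + |μS1 − μ̂S1| + |μS0 − μ̂S0|). -/
private lemma ratio_abs_bound (ε d N S : ℝ) (hε : 0 < ε) (hd : ε^3 ≤ d)
    (hN : |N| ≤ S) : |N / d| ≤ ε⁻¹ ^ 3 * S := by
  have hd0 : 0 < d := lt_of_lt_of_le (by positivity) hd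
  rw [abs_div, abs_of_pos hd0, div_le_iff₀ hd0]
  have hS : 0 ≤ S := le_trans (abs_nonneg _) hN
  have h1 : ε⁻¹ ^ 3 * S * ε^3 ≤ ε⁻¹ ^ 3 * S * d :=
    mul_le_mul_of_nonneg_left hd (by positivity)
  have h2 : ε⁻¹ ^ 3 * S * ε^3 = S := by field_simp
  linarith

private lemma lin_abs_bound (ε d N : ℝ) (hε : 0 < ε) (hd : ε ≤ d) :
    |N / d| ≤ ε⁻¹ * |N| := by
  have hd0 : 0 < d := lt_of_lt_of_le hε hd
  rw [abs_div, abs_of_pos hd0, div_le_iff₀ hd0]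
  have h1 : ε⁻¹ * |N| * ε ≤ ε⁻¹ * |N| * d :=
    mul_le_mul_of_nonneg_left hd (by positivity)
  have h2 : ε⁻¹ * |N| * ε = |N| := by field_simp
  linarith

private lemma abs_sub' (a b : ℝ) : |a - b| ≤ |a| + |b| := by
  rw [sub_eq_add_neg]
  exact (abs_add_le _ _).trans (by rw [abs_neg])

private lemma num_bound (p p' g g' : ℝ)
    (hp'0 : 0 ≤ p') (hp'1 : p' ≤ 1)
    (hg0 : 0 ≤ g) (hg1 : g ≤ 1) (hg'0 : 0 ≤ g') (hg'1 : g' ≤ 1) :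
    |p * g * (1 - g') - p' * g' * (1 - g)| ≤ |p - p'| + |g - g'| := by
  have key : p * g * (1 - g') - p' * g' * (1 - g)
      = (p - p') * (g * (1 - g')) + p' * (g - g') := by ring
  rw [key]
  have t := abs_add_le ((p - p') * (g * (1 - g'))) (p' * (g - g'))
  rw [abs_mul, abs_mul, abs_mul] at t
  have hg : |g| ≤ 1 := abs_le.2 ⟨by linarith, hg1⟩
  have hg' : |1 - g'| ≤ 1 := abs_le.2 ⟨by linarith, by linarith⟩
  have hp' : |p'| ≤ 1 := abs_le.2 ⟨by linarith, hp'1⟩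
  have m1 : |g| * |1 - g'| ≤ 1 :=
    le_trans (mul_le_of_le_one_right (abs_nonneg g) hg') hg
  have e1 : |p - p'| * (|g| * |1 - g'|) ≤ |p - p'| :=
    mul_le_of_le_one_right (abs_nonneg _) m1
  have e2 : |p'| * |g - g'| ≤ |g - g'| :=
    mul_le_of_le_one_left (abs_nonneg _) hp'
  linarith

private lemma combine (a b c d x1 x2 y1 y2 y3 y4 P Q : ℝ)
    (ha : |a| ≤ P) (hb : |b| ≤ P) (hc : |c| ≤ Q) (hd : |d| ≤ Q) :
    |a * x1 - b * x2 + c * y1 - d * y2 - c * y3 + d * y4|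
      ≤ P * (|x1| + |x2|) + Q * (|y1| + |y2| + |y3| + |y4|) := by
  have tri : |a * x1 - b * x2 + c * y1 - d * y2 - c * y3 + d * y4|
      ≤ |a * x1| + |b * x2| + |c * y1| + |d * y2| + |c * y3| + |d * y4| := by
    calc |a * x1 - b * x2 + c * y1 - d * y2 - c * y3 + d * y4|
        ≤ |a * x1 - b * x2 + c * y1 - d * y2 - c * y3| + |d * y4| := abs_add_le _ _
      _ ≤ |a * x1 - b * x2 + c * y1 - d * y2| + |c * y3| + |d * y4| := by
          linarith [abs_sub' (a * x1 - b * x2 + c * y1 - d * y2) (c * y3)]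
      _ ≤ |a * x1 - b * x2 + c * y1| + |d * y2| + |c * y3| + |d * y4| := by
          linarith [abs_sub' (a * x1 - b * x2 + c * y1) (d * y2)]
      _ ≤ |a * x1 - b * x2| + |c * y1| + |d * y2| + |c * y3| + |d * y4| := by
          linarith [abs_add_le (a * x1 - b * x2) (c * y1)]
      _ ≤ |a * x1| + |b * x2| + |c * y1| + |d * y2| + |c * y3| + |d * y4| := by
          linarith [abs_sub' (a * x1) (b * x2)]
  have e1 : |a * x1| ≤ P * |x1| := by
    rw [abs_mul]; exact mul_le_mul_of_nonneg_right ha (abs_nonneg _)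
  have e2 : |b * x2| ≤ P * |x2| := by
    rw [abs_mul]; exact mul_le_mul_of_nonneg_right hb (abs_nonneg _)
  have e3 : |c * y1| ≤ Q * |y1| := by
    rw [abs_mul]; exact mul_le_mul_of_nonneg_right hc (abs_nonneg _)
  have e4 : |d * y2| ≤ Q * |y2| := by
    rw [abs_mul]; exact mul_le_mul_of_nonneg_right hd (abs_nonneg _)
  have e5 : |c * y3| ≤ Q * |y3| := by
    rw [abs_mul]; exact mul_le_mul_of_nonneg_right hc (abs_nonneg _)
  have e6 : |d * y4| ≤ Q * |y4| := by
    rw [abs_mul]; exact mul_le_mul_of_nonneg_right hd (abs_nonneg _)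
  have expand : P * (|x1| + |x2|) + Q * (|y1| + |y2| + |y3| + |y4|)
      = P * |x1| + P * |x2| + Q * |y1| + Q * |y2| + Q * |y3| + Q * |y4| := by ring
  linarith

private lemma termA_bound (ε p p' g g' : ℝ) (hε : 0 < ε)
    (hp0 : 0 ≤ p) (hp1 : p ≤ 1)
    (hp'0 : 0 ≤ p') (hp'1 : p' ≤ 1)
    (hg0 : 0 ≤ g) (hg1 : g ≤ 1) (hg'0 : 0 ≤ g') (hg'1 : g' ≤ 1)
    (h1 : ε ≤ p') (h3 : ε ≤ g') (h4 : ε ≤ 1 - g) :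
    |p * g * (1 - g') / (p' * g' * (1 - g)) - 1| ≤ ε⁻¹ ^ 3 * (|p - p'| + |g - g'|) := by
  have hd : ε^3 ≤ p' * g' * (1 - g) := by
    have h12 : ε * ε ≤ p' * g' := mul_le_mul h1 h3 (le_of_lt hε) hp'0
    have := mul_le_mul h12 h4 (le_of_lt hε) (by positivity : (0:ℝ) ≤ p' * g')
    nlinarith
  have hd0 : (0:ℝ) < p' * g' * (1 - g) := lt_of_lt_of_le (by positivity) hd
  rw [div_sub_one (ne_of_gt hd0)]
  exact ratio_abs_bound ε _ _ _ hε hd (num_bound p p' g g' hp'0 hp'1 hg0 hg1 hg'0 hg'1)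

/-- Pointwise product-of-errors bound underlying the convergence-rate theorem
for the multiply robust estimator (Theorem 2). -/
theorem stmt_3
    (ε : ℝ) (hε : ε ∈ Set.Ioc (0 : ℝ) 1)
    (πE πO πG πE' πO' πG' : ℝ)
    (μE1 μE0 μS1 μS0 μY1 μY0 : ℝ)
    (μE1' μE0' μS1' μS0' μY1' μY0' : ℝ)
    (hπE0 : 0 ≤ πE) (hπE1 : πE ≤ 1)
    (hπG0 : 0 ≤ πG) (hπG1 : πG ≤ 1)
    (hπE'0 : 0 ≤ πE') (hπE'1 : πE' ≤ 1)
    (hπG'0 : 0 ≤ πG') (hπG'1 : πG' ≤ 1)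
    (h1 : ε ≤ πE') (h2 : ε ≤ 1 - πE')
    (h3 : ε ≤ πG') (h4 : ε ≤ 1 - πG)
    (h5 : ε ≤ πO') (h6 : ε ≤ 1 - πO')
    (R : ℝ)
    (hR : R = (πE * πG * (1 - πG') / (πE' * πG' * (1 - πG)) - 1) * (μE1 - μE1')
      - ((1 - πE) * πG * (1 - πG') / ((1 - πE') * πG' * (1 - πG)) - 1) * (μE0 - μE0')
      + ((πO - πO') / πO') * (μY1 - μY1')
      - ((πO' - πO) / (1 - πO')) * (μY0 - μY0')
      - ((πO - πO') / πO') * (μS1 - μS1')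
      + ((πO' - πO) / (1 - πO')) * (μS0 - μS0')) :
    |R| ≤ ε⁻¹ ^ 3 * (|πE - πE'| + |πG - πG'|) * (|μE1 - μE1'| + |μE0 - μE0'|)
      + ε⁻¹ * |πO - πO'| * (|μY1 - μY1'| + |μY0 - μY0'| + |μS1 - μS1'| + |μS0 - μS0'|) := by
  obtain ⟨hε0, hε1⟩ := hε
  have hA : |πE * πG * (1 - πG') / (πE' * πG' * (1 - πG)) - 1|
      ≤ ε⁻¹ ^ 3 * (|πE - πE'| + |πG - πG'|) :=
    termA_bound ε πE πE' πG πG' hε0 hπE0 hπE1 hπE'0 hπE'1 hπG0 hπG1 hπG'0 hπG'1 h1 h3 h4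
  have hB : |(1 - πE) * πG * (1 - πG') / ((1 - πE') * πG' * (1 - πG)) - 1|
      ≤ ε⁻¹ ^ 3 * (|πE - πE'| + |πG - πG'|) := by
    have := termA_bound ε (1 - πE) (1 - πE') πG πG' hε0 (by linarith) (by linarith)
      (by linarith) (by linarith) hπG0 hπG1 hπG'0 hπG'1 h2 h3 h4
    have hre : (1 - πE) - (1 - πE') = -(πE - πE') := by ring
    rwa [hre, abs_neg] at this
  have hO1 : |(πO - πO') / πO'| ≤ ε⁻¹ * |πO - πO'| := lin_abs_bound ε _ _ hε0 h5
  have hO2 : |(πO' - πO) / (1 - πO')| ≤ ε⁻¹ * |πO - πO'| := by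
    rw [abs_sub_comm πO πO']
    exact lin_abs_bound ε _ _ hε0 h6
  rw [hR]
  exact combine _ _ _ _ _ _ _ _ _ _ _ _ hA hB hO1 hO2
end

section
/- Let ε1, ε2, ε3 > 0 and let πE, πG, π̂E, π̂G be real numbers with 0 ≤ πE ≤ 1, 0 ≤ πG ≤ 1, 0 ≤ π̂E ≤ 1, 0 ≤ π̂G ≤ 1, ε1 ≤ π̂E, ε2 ≤ π̂G, and ε3 ≤ 1 − πG. Then (πE·πG·(1−π̂G)/(π̂E·π̂G·(1−πG)) − 1)² ≤ (2/(ε1²·ε2²·ε3²))·((πE − π̂E)² + (πG − π̂G)²). -/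
private lemma aux_div (N D ε S : ℝ) (hε : 0 < ε) (hεD : ε ≤ D)
    (hnum : (N - D) ^ 2 ≤ 2 * S) (hS : 0 ≤ S) :
    (N / D - 1) ^ 2 ≤ 2 / ε ^ 2 * S := by
  have hDpos : 0 < D := lt_of_lt_of_le hε hεD
  have hrw : N / D - 1 = (N - D) / D := by field_simp
  rw [hrw, div_pow]
  have hD2 : ε ^ 2 ≤ D ^ 2 := by nlinarith
  calc (N - D) ^ 2 / D ^ 2 ≤ (N - D) ^ 2 / ε ^ 2 :=
        div_le_div_of_nonneg_left (sq_nonneg _) (by positivity) hD2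
    _ ≤ (2 * S) / ε ^ 2 := by gcongr
    _ = 2 / ε ^ 2 * S := by ring

/-- Inequality from the convergence-rate analysis of the multiply robust
estimator (treated-arm coefficient). -/
theorem stmt_4
    (ε1 ε2 ε3 : ℝ) (hε1 : 0 < ε1) (hε2 : 0 < ε2) (hε3 : 0 < ε3)
    (πE πG πE' πG' : ℝ)
    (hπE0 : 0 ≤ πE) (hπE1 : πE ≤ 1)
    (hπG0 : 0 ≤ πG) (hπG1 : πG ≤ 1)
    (hπE'0 : 0 ≤ πE') (hπE'1 : πE' ≤ 1)
    (hπG'0 : 0 ≤ πG') (hπG'1 : πG' ≤ 1)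
    (h1 : ε1 ≤ πE') (h2 : ε2 ≤ πG') (h3 : ε3 ≤ 1 - πG) :
    (πE * πG * (1 - πG') / (πE' * πG' * (1 - πG)) - 1) ^ 2
      ≤ (2 / (ε1 ^ 2 * ε2 ^ 2 * ε3 ^ 2)) * ((πE - πE') ^ 2 + (πG - πG') ^ 2) := by
  have hεD : ε1 * ε2 * ε3 ≤ πE' * πG' * (1 - πG) := by
    have h12 : ε1 * ε2 ≤ πE' * πG' := mul_le_mul h1 h2 hε2.le hπE'0
    calc ε1 * ε2 * ε3 ≤ (πE' * πG') * ε3 := by nlinarith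
      _ ≤ πE' * πG' * (1 - πG) := mul_le_mul_of_nonneg_left h3 (mul_nonneg hπE'0 hπG'0)
  have hnum : (πE * πG * (1 - πG') - πE' * πG' * (1 - πG)) ^ 2
      ≤ 2 * ((πE - πE') ^ 2 + (πG - πG') ^ 2) := by
    have hND : πE * πG * (1 - πG') - πE' * πG' * (1 - πG)
        = (πE - πE') * (πG * (1 - πG')) + πE' * (πG - πG') := by ring
    have hg0 : (0:ℝ) ≤ πG * (1 - πG') := mul_nonneg hπG0 (by linarith)
    have hg1 : πG * (1 - πG') ≤ 1 := by nlinarith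
    have ha : ((πE - πE') * (πG * (1 - πG'))) ^ 2 ≤ (πE - πE') ^ 2 := by
      nlinarith [mul_nonneg (mul_nonneg (sub_nonneg.mpr hg1)
        (by linarith : (0:ℝ) ≤ 1 + πG * (1 - πG'))) (sq_nonneg (πE - πE'))]
    have hb : (πE' * (πG - πG')) ^ 2 ≤ (πG - πG') ^ 2 := by
      nlinarith [mul_nonneg (mul_nonneg (sub_nonneg.mpr hπE'1)
        (by linarith : (0:ℝ) ≤ 1 + πE')) (sq_nonneg (πG - πG'))]
    rw [hND]
    nlinarith [sq_nonneg ((πE - πE') * (πG * (1 - πG')) - πE' * (πG - πG'))]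
  have := aux_div (πE * πG * (1 - πG')) (πE' * πG' * (1 - πG)) (ε1 * ε2 * ε3)
    ((πE - πE') ^ 2 + (πG - πG') ^ 2) (by positivity) hεD hnum (by positivity)
  calc (πE * πG * (1 - πG') / (πE' * πG' * (1 - πG)) - 1) ^ 2
      ≤ 2 / (ε1 * ε2 * ε3) ^ 2 * ((πE - πE') ^ 2 + (πG - πG') ^ 2) := this
    _ = (2 / (ε1 ^ 2 * ε2 ^ 2 * ε3 ^ 2)) * ((πE - πE') ^ 2 + (πG - πG') ^ 2) := by
        rw [mul_pow, mul_pow]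
end

section
/- Let ε1, ε2, ε3 > 0 and let πE, πG, π̂E, π̂G be real numbers with 0 ≤ πE ≤ 1, 0 ≤ πG ≤ 1, 0 ≤ π̂E ≤ 1, 0 ≤ π̂G ≤ 1, ε1 ≤ 1 − π̂E, ε2 ≤ π̂G, and ε3 ≤ 1 − πG. Then ((1−πE)·πG·(1−π̂G)/((1−π̂E)·π̂G·(1−πG)) − 1)² ≤ (2/(ε1²·ε2²·ε3²))·((πE − π̂E)² + (πG − π̂G)²). -/
/-- Inequality from the convergence-rate analysis of the multiply robust
estimator (control-arm coefficient). -/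
theorem stmt_5
    (ε1 ε2 ε3 : ℝ) (hε1 : 0 < ε1) (hε2 : 0 < ε2) (hε3 : 0 < ε3)
    (πE πG πE' πG' : ℝ)
    (hπE0 : 0 ≤ πE) (hπE1 : πE ≤ 1)
    (hπG0 : 0 ≤ πG) (hπG1 : πG ≤ 1)
    (hπE'0 : 0 ≤ πE') (hπE'1 : πE' ≤ 1)
    (hπG'0 : 0 ≤ πG') (hπG'1 : πG' ≤ 1)
    (h1 : ε1 ≤ 1 - πE') (h2 : ε2 ≤ πG') (h3 : ε3 ≤ 1 - πG) :
    ((1 - πE) * πG * (1 - πG') / ((1 - πE') * πG' * (1 - πG)) - 1) ^ 2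
      ≤ (2 / (ε1 ^ 2 * ε2 ^ 2 * ε3 ^ 2)) * ((πE - πE') ^ 2 + (πG - πG') ^ 2) := by
  set N := (1 - πE) * πG * (1 - πG') with hN
  set D := (1 - πE') * πG' * (1 - πG) with hD
  have hε : (0:ℝ) < ε1 * ε2 * ε3 := by positivity
  have hDε : ε1 * ε2 * ε3 ≤ D := by
    apply mul_le_mul (mul_le_mul h1 h2 hε2.le (by linarith)) h3 hε3.le
    nlinarith
  have hD0 : 0 < D := lt_of_lt_of_le hε hDε
  have key : (N - D) ^ 2 ≤ 2 * ((πE - πE') ^ 2 + (πG - πG') ^ 2) := by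
    have hND : N - D = (πE' - πE) * (πG * (1 - πG')) + (1 - πE') * (πG - πG') := by
      ring
    rw [hND]
    have h01 : 0 ≤ πG * (1 - πG') := by nlinarith
    have h02 : πG * (1 - πG') ≤ 1 := by nlinarith
    have hm2 : (πG * (1 - πG')) ^ 2 ≤ 1 := by nlinarith
    have he2 : (1 - πE') ^ 2 ≤ 1 := by nlinarith
    nlinarith [sq_nonneg ((πE' - πE) * (πG * (1 - πG')) - (1 - πE') * (πG - πG')),
      mul_le_mul_of_nonneg_left hm2 (sq_nonneg (πE' - πE)),
      mul_le_mul_of_nonneg_left he2 (sq_nonneg (πG - πG'))]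
  have step1 : (N / D - 1) ^ 2 = (N - D) ^ 2 / D ^ 2 := by
    rw [div_sub_one hD0.ne', div_pow]
  rw [step1]
  have hsq : (ε1 * ε2 * ε3) ^ 2 ≤ D ^ 2 := pow_le_pow_left₀ hε.le hDε 2
  calc (N - D) ^ 2 / D ^ 2 ≤ (N - D) ^ 2 / (ε1 * ε2 * ε3) ^ 2 := by
        apply div_le_div_of_nonneg_left (sq_nonneg _) (by positivity) hsq
    _ ≤ 2 * ((πE - πE') ^ 2 + (πG - πG') ^ 2) / (ε1 * ε2 * ε3) ^ 2 := by
        apply div_le_div_of_nonneg_right key (by positivity)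
    _ = (2 / (ε1 ^ 2 * ε2 ^ 2 * ε3 ^ 2)) * ((πE - πE') ^ 2 + (πG - πG') ^ 2) := by
        rw [mul_pow, mul_pow]
        ring
end

section
/- Let πE, πO, πG, μE1, μE0, μS1, μS0, μY1, μY0, μ̂E1, μ̂E0, μ̂S1, μ̂S0, μ̂Y1, μ̂Y0 be real numbers with 0 ≤ πE ≤ 1, 0 ≤ πO ≤ 1 and 0 ≤ πG ≤ 1. Define A := πO·(1−πG)·(μY1 − μ̂Y0 − μS1 + μ̂S0 + μ̂E1 − μ̂E0) + (1−πO)·(1−πG)·(μ̂Y1 − μY0 + μS0 − μ̂S1 + μ̂E1 − μ̂E0), B := πE·πG·(μE1 − μ̂E0 + μ̂Y1 − μ̂Y0 + μ̂S0 − μ̂S1) + (1−πE)·πG·(μ̂E1 − μE0 + μ̂Y1 − μ̂Y0 + μ̂S0 − μ̂S1), and τ := μY1 − μY0 + μE1 − μE0 + μS0 − μS1. Then |A + B − τ| ≤ |μ̂Y1 − μY1| + |μ̂Y0 − μY0| + |μ̂E1 − μE1| + |μ̂E0 − μE0| + |μ̂S1 − μS1| + |μ̂S0 − μS0|. -/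
lemma coef_bound (c e : ℝ) (h0 : 0 ≤ c) (h1 : c ≤ 1) : |c * e| ≤ |e| := by
  rw [abs_mul, abs_of_nonneg h0]
  exact mul_le_of_le_one_left (abs_nonneg e) h1

/-- Pointwise bias bound for the regression-based two-stage estimator
(Corollary 1). -/
theorem stmt_7
    (πE πO πG : ℝ)
    (μE1 μE0 μS1 μS0 μY1 μY0 : ℝ)
    (μE1' μE0' μS1' μS0' μY1' μY0' : ℝ)
    (hπE0 : 0 ≤ πE) (hπE1 : πE ≤ 1)
    (hπO0 : 0 ≤ πO) (hπO1 : πO ≤ 1)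
    (hπG0 : 0 ≤ πG) (hπG1 : πG ≤ 1)
    (A B τ : ℝ)
    (hA : A = πO * (1 - πG) * (μY1 - μY0' - μS1 + μS0' + μE1' - μE0')
      + (1 - πO) * (1 - πG) * (μY1' - μY0 + μS0 - μS1' + μE1' - μE0'))
    (hB : B = πE * πG * (μE1 - μE0' + μY1' - μY0' + μS0' - μS1')
      + (1 - πE) * πG * (μE1' - μE0 + μY1' - μY0' + μS0' - μS1'))
    (hτ : τ = μY1 - μY0 + μE1 - μE0 + μS0 - μS1) :
    |A + B - τ| ≤ |μY1' - μY1| + |μY0' - μY0| + |μE1' - μE1| + |μE0' - μE0|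
      + |μS1' - μS1| + |μS0' - μS0| := by
  have hO1 : 0 ≤ (1 - πO) * (1 - πG) := mul_nonneg (by linarith) (by linarith)
  have hO2 : 0 ≤ πO * (1 - πG) := mul_nonneg hπO0 (by linarith)
  have hE1' : 0 ≤ (1 - πE) * πG := mul_nonneg (by linarith) hπG0
  have hE2 : 0 ≤ πE * πG := mul_nonneg hπE0 hπG0
  have hO1' : (1 - πO) * (1 - πG) ≤ 1 - πG := by nlinarith
  have hO2' : πO * (1 - πG) ≤ 1 - πG := by nlinarith
  have hE1'' : (1 - πE) * πG ≤ πG := by nlinarith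
  have hE2' : πE * πG ≤ πG := by nlinarith
  have t1 := coef_bound ((1 - πO) * (1 - πG) + πG) (μY1' - μY1)
    (by linarith) (by linarith)
  have t2 := coef_bound (πO * (1 - πG) + πG) (μY0' - μY0)
    (by linarith) (by linarith)
  have t3 := coef_bound ((1 - πG) + (1 - πE) * πG) (μE1' - μE1)
    (by linarith) (by linarith)
  have t4 := coef_bound ((1 - πG) + πE * πG) (μE0' - μE0)
    (by linarith) (by linarith)
  have t5 := coef_bound ((1 - πO) * (1 - πG) + πG) (μS1' - μS1)
    (by linarith) (by linarith)
  have t6 := coef_bound (πO * (1 - πG) + πG) (μS0' - μS0)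
    (by linarith) (by linarith)
  have key : A + B - τ =
      ((1 - πO) * (1 - πG) + πG) * (μY1' - μY1)
      - (πO * (1 - πG) + πG) * (μY0' - μY0)
      + ((1 - πG) + (1 - πE) * πG) * (μE1' - μE1)
      - ((1 - πG) + πE * πG) * (μE0' - μE0)
      - ((1 - πO) * (1 - πG) + πG) * (μS1' - μS1)
      + (πO * (1 - πG) + πG) * (μS0' - μS0) := by
    subst hA hB hτ; ring
  rw [key]
  have := abs_add_le (((1 - πO) * (1 - πG) + πG) * (μY1' - μY1)
      - (πO * (1 - πG) + πG) * (μY0' - μY0)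
      + ((1 - πG) + (1 - πE) * πG) * (μE1' - μE1)
      - ((1 - πG) + πE * πG) * (μE0' - μE0)
      - ((1 - πO) * (1 - πG) + πG) * (μS1' - μS1))
    ((πO * (1 - πG) + πG) * (μS0' - μS0))
  have := abs_sub (((1 - πO) * (1 - πG) + πG) * (μY1' - μY1)
      - (πO * (1 - πG) + πG) * (μY0' - μY0)
      + ((1 - πG) + (1 - πE) * πG) * (μE1' - μE1)
      - ((1 - πG) + πE * πG) * (μE0' - μE0))
    (((1 - πO) * (1 - πG) + πG) * (μS1' - μS1))
  have := abs_sub (((1 - πO) * (1 - πG) + πG) * (μY1' - μY1)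
      - (πO * (1 - πG) + πG) * (μY0' - μY0)
      + ((1 - πG) + (1 - πE) * πG) * (μE1' - μE1))
    (((1 - πG) + πE * πG) * (μE0' - μE0))
  have := abs_add_le (((1 - πO) * (1 - πG) + πG) * (μY1' - μY1)
      - (πO * (1 - πG) + πG) * (μY0' - μY0))
    (((1 - πG) + (1 - πE) * πG) * (μE1' - μE1))
  have := abs_sub (((1 - πO) * (1 - πG) + πG) * (μY1' - μY1))
    ((πO * (1 - πG) + πG) * (μY0' - μY0))
  linarith
end

section
/- Let ε ∈ (0,1] and let πE, πO, πG, π̂E, π̂O, π̂G, μE1, μE0, μS1, μS0, μY1, μY0 be real numbers with 0 ≤ πE ≤ 1, 0 ≤ πG ≤ 1, 0 ≤ π̂E ≤ 1, 0 ≤ π̂G ≤ 1, and ε ≤ π̂E, ε ≤ 1−π̂E, ε ≤ π̂G, ε ≤ 1−πG, ε ≤ π̂O, ε ≤ 1−π̂O. Define P := (πE·πG·(1−π̂G)/(π̂E·(1−πG)·π̂G))·μE1 − ((1−πE)·(1−π̂G)·πG/((1−π̂E)·(1−πG)·π̂G))·μE0 + (πO/π̂O)·(μY1 − μS1) − ((1−πO)/(1−π̂O))·(μY0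 − μS0) and τ := μY1 − μY0 + μE1 − μE0 + μS0 − μS1. Then |P − τ| ≤ ε⁻³·(|πE − π̂E| + |πG − π̂G|)·(|μE1| + |μE0|) + ε⁻¹·|πO − π̂O|·(|μY1 − μS1| + |μY0 − μS0|). -/
/-!
`P - τ` is a combination of the outcome regressions whose coefficients are
`a / b - 1 = (a - b) / b`, with `a / b` a ratio of true to estimated propensity products.
Overlap bounds each denominator `b` below by `ε` (by `ε ^ 3` for the triple products), and for
the triple products `x g (1 - g') - x' (1 - g) g' = (x - x') g (1 - g') + x' (g - g')` bounds
the numerator `a - b` by the estimation errors.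
-/

lemma abs_div_sub_one_le {ε a b c : ℝ} (hε : 0 < ε) (hb : ε ≤ b) (hab : |a - b| ≤ c) :
    |a / b - 1| ≤ ε⁻¹ * c := by
  have hb0 : 0 < b := hε.trans_le hb
  calc |a / b - 1| = |a - b| / b := by
        rw [div_sub_one hb0.ne', abs_div, abs_of_pos hb0]
    _ ≤ c / ε := div_le_div₀ ((abs_nonneg _).trans hab) hab hε hb
    _ = ε⁻¹ * c := div_eq_inv_mul c ε

lemma pow_three_le_mul_mul {ε a b c : ℝ} (hε : 0 ≤ ε) (ha : ε ≤ a) (hb : ε ≤ b)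
    (hc : ε ≤ c) : ε ^ 3 ≤ a * b * c := by
  have ha0 : 0 ≤ a := hε.trans ha
  have hb0 : 0 ≤ b := hε.trans hb
  calc ε ^ 3 = ε * ε * ε := by ring
    _ ≤ a * b * c := by gcongr

lemma abs_mul_mul_sub_mul_mul_le {x x' g g' : ℝ} (hx'0 : 0 ≤ x') (hx'1 : x' ≤ 1)
    (hg0 : 0 ≤ g) (hg1 : g ≤ 1) (hg'0 : 0 ≤ g') (hg'1 : g' ≤ 1) :
    |x * g * (1 - g') - x' * (1 - g) * g'| ≤ |x - x'| + |g - g'| := by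
  have hw0 : 0 ≤ g * (1 - g') := mul_nonneg hg0 (by linarith)
  have hw1 : g * (1 - g') ≤ 1 := mul_le_one₀ hg1 (by linarith) (by linarith)
  calc |x * g * (1 - g') - x' * (1 - g) * g'|
        = |(x - x') * (g * (1 - g')) + x' * (g - g')| := by ring_nf
    _ ≤ |(x - x') * (g * (1 - g'))| + |x' * (g - g')| := abs_add_le _ _
    _ = |x - x'| * |g * (1 - g')| + |x'| * |g - g'| := by
        rw [abs_mul (x - x'), abs_mul x']
    _ ≤ |x - x'| * 1 + 1 * |g - g'| := by
        gcongr
        · exact abs_le.mpr ⟨by linarith, hw1⟩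
        · exact abs_le.mpr ⟨by linarith, hx'1⟩
    _ = |x - x'| + |g - g'| := by ring

lemma abs_mul_mul_div_sub_one_le {ε x x' g g' : ℝ} (hε : 0 < ε) (hx'1 : x' ≤ 1)
    (hg0 : 0 ≤ g) (hg'1 : g' ≤ 1) (hx' : ε ≤ x') (hg : ε ≤ 1 - g) (hg' : ε ≤ g') :
    |x * g * (1 - g') / (x' * (1 - g) * g') - 1| ≤ ε⁻¹ ^ 3 * (|x - x'| + |g - g'|) := by
  rw [inv_pow]
  exact abs_div_sub_one_le (by positivity) (pow_three_le_mul_mul hε.le hx' hg hg')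
    (abs_mul_mul_sub_mul_mul_le (by linarith) hx'1 hg0 (by linarith) (by linarith) hg'1)

lemma abs_mul_sub_mul_le {a b u v K : ℝ} (ha : |a| ≤ K) (hb : |b| ≤ K) :
    |a * u - b * v| ≤ K * (|u| + |v|) :=
  calc |a * u - b * v| ≤ |a * u| + |b * v| := abs_sub _ _
    _ = |a| * |u| + |b| * |v| := by rw [abs_mul, abs_mul]
    _ ≤ K * |u| + K * |v| := by gcongr
    _ = K * (|u| + |v|) := by ring

theorem stmt_10_general
    (ε : ℝ) (hε : ε ∈ Set.Ioc (0 : ℝ) 1)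
    (πE πO πG πE' πO' πG' : ℝ)
    (μE1 μE0 μS1 μS0 μY1 μY0 : ℝ)
    (hπG0 : 0 ≤ πG)
    (hπE'0 : 0 ≤ πE') (hπE'1 : πE' ≤ 1)
    (hπG'1 : πG' ≤ 1)
    (h1 : ε ≤ πE') (h2 : ε ≤ 1 - πE')
    (h3 : ε ≤ πG') (h4 : ε ≤ 1 - πG)
    (h5 : ε ≤ πO') (h6 : ε ≤ 1 - πO')
    (P τ : ℝ)
    (hP : P = (πE * πG * (1 - πG') / (πE' * (1 - πG) * πG')) * μE1
      - ((1 - πE) * (1 - πG') * πG / ((1 - πE') * (1 - πG) * πG')) * μE0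
      + (πO / πO') * (μY1 - μS1)
      - ((1 - πO) / (1 - πO')) * (μY0 - μS0))
    (hτ : τ = μY1 - μY0 + μE1 - μE0 + μS0 - μS1) :
    |P - τ| ≤ ε⁻¹ ^ 3 * (|πE - πE'| + |πG - πG'|) * (|μE1| + |μE0|)
      + ε⁻¹ * |πO - πO'| * (|μY1 - μS1| + |μY0 - μS0|) := by
  obtain ⟨hε0, -⟩ := hε
  have hE1 := abs_mul_mul_div_sub_one_le (x := πE) hε0 hπE'1 hπG0 hπG'1 h1 h4 h3
  have hE0 := abs_mul_mul_div_sub_one_le (x := 1 - πE) hε0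
    (sub_le_self 1 hπE'0) hπG0 hπG'1 h2 h4 h3
  rw [mul_right_comm (1 - πE), sub_sub_sub_cancel_left, abs_sub_comm πE'] at hE0
  have hO1 := abs_div_sub_one_le (a := πO) hε0 h5 le_rfl
  have hO0 := abs_div_sub_one_le (a := 1 - πO) hε0 h6
    (by rw [sub_sub_sub_cancel_left, abs_sub_comm])
  have hsplit : P - τ
      = ((πE * πG * (1 - πG') / (πE' * (1 - πG) * πG') - 1) * μE1
          - ((1 - πE) * (1 - πG') * πG / ((1 - πE') * (1 - πG) * πG') - 1) * μE0)
        + ((πO / πO' - 1) * (μY1 - μS1) - ((1 - πO) / (1 - πO') - 1) * (μY0 - μS0)) := by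
    rw [hP, hτ]; ring
  rw [hsplit]
  exact (abs_add_le _ _).trans
    (add_le_add (abs_mul_sub_mul_le hE1 hE0) (abs_mul_sub_mul_le hO1 hO0))

/-- Pointwise bias bound for the propensity-based two-stage estimator
(Corollary 1). -/
theorem stmt_10
    (ε : ℝ) (hε : ε ∈ Set.Ioc (0 : ℝ) 1)
    (πE πO πG πE' πO' πG' : ℝ)
    (μE1 μE0 μS1 μS0 μY1 μY0 : ℝ)
    (hπE0 : 0 ≤ πE) (hπE1 : πE ≤ 1)
    (hπG0 : 0 ≤ πG) (hπG1 : πG ≤ 1)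
    (hπE'0 : 0 ≤ πE') (hπE'1 : πE' ≤ 1)
    (hπG'0 : 0 ≤ πG') (hπG'1 : πG' ≤ 1)
    (h1 : ε ≤ πE') (h2 : ε ≤ 1 - πE')
    (h3 : ε ≤ πG') (h4 : ε ≤ 1 - πG)
    (h5 : ε ≤ πO') (h6 : ε ≤ 1 - πO')
    (P τ : ℝ)
    (hP : P = (πE * πG * (1 - πG') / (πE' * (1 - πG) * πG')) * μE1
      - ((1 - πE) * (1 - πG') * πG / ((1 - πE') * (1 - πG) * πG')) * μE0
      + (πO / πO') * (μY1 - μS1)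
      - ((1 - πO) / (1 - πO')) * (μY0 - μS0))
    (hτ : τ = μY1 - μY0 + μE1 - μE0 + μS0 - μS1) :
    |P - τ| ≤ ε⁻¹ ^ 3 * (|πE - πE'| + |πG - πG'|) * (|μE1| + |μE0|)
      + ε⁻¹ * |πO - πO'| * (|μY1 - μS1| + |μY0 - μS0|) :=
  stmt_10_general ε hε πE πO πG πE' πO' πG' μE1 μE0 μS1 μS0 μY1 μY0 hπG0 hπE'0 hπE'1 hπG'1 h1 h2 h3
    h4 h5 h6 P τ hP hτ
end
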